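/- arXiv:1408.0348 — 3 statements merged into one kernel-verified Lean document; each statement's English description precedes it below -/
import Mathlib

section
/- Let X be a geodesic metric space that is δ-hyperbolic (every geodesic triangle is δ-thin). There exist constants D₁, D₂ ≥ 0 depending only on δ with the following property. Let h be an isometry of X admitting a geodesic axis α, i.e., a bi-infinite geodesic such that hⁿ(α) is contained in the 2δ-neighborhood of α for every integer n. Let x ∈ X and let q be a nearest-point projection of x to α. If d(q, h(q)) > 28δ, then every geodesic γ from x to h(x) can be written as a concatenation γ = γ₁γ₂γ₃ of three subsegments such that: the terminal point of γ₁ is within distance D₁ of q; the initial point of γ₃ is within distance D₁ of h(q); γ₂ is contained in the D₂-neighborhood of α; and the length of γ₂ is at least d(q, h(q)) − 28δ. (One may take D₁ = 10δ and D₂ = 3δ.) -/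
open Metric

/-- `γ` restricted to `[a, b]` is a geodesic parametrized by arc length. -/
def IsGeodesicOn {X : Type*} [MetricSpace X] (γ : ℝ → X) (a b : ℝ) : Prop :=
  ∀ s ∈ Set.Icc a b, ∀ t ∈ Set.Icc a b, dist (γ s) (γ t) = |s - t|

/-- `γ` is a geodesic segment from `x` to `y`, parametrized by arc length on
`[0, dist x y]`. -/
def IsGeodesicSegment {X : Type*} [MetricSpace X] (γ : ℝ → X) (x y : X) : Prop :=
  γ 0 = x ∧ γ (dist x y) = y ∧ IsGeodesicOn γ 0 (dist x y)

/-- A geodesic metric space: any two points are joined by a geodesic segment. -/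
def GeodesicSpace (X : Type*) [MetricSpace X] : Prop :=
  ∀ x y : X, ∃ γ : ℝ → X, IsGeodesicSegment γ x y

/-- Every geodesic triangle is `δ`-thin: each side is contained in the
`δ`-neighborhood of the union of the other two sides. -/
def ThinTriangles (X : Type*) [MetricSpace X] (δ : ℝ) : Prop :=
  ∀ x y z : X, ∀ γ₁ γ₂ γ₃ : ℝ → X,
    IsGeodesicSegment γ₁ x y → IsGeodesicSegment γ₂ y z → IsGeodesicSegment γ₃ x z →
    ∀ t ∈ Set.Icc (0 : ℝ) (dist x z),
      Metric.infDist (γ₃ t) (γ₁ '' Set.Icc (0 : ℝ) (dist x y) ∪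
        γ₂ '' Set.Icc (0 : ℝ) (dist y z)) ≤ δ

/-!
Let `p` be the nearest point to `x` on the axis `α`; then `h p` is the nearest point to `h x` on
the line `h ∘ α`, which is `2δ`-close to `α`. By thinness, `γ` lies in the `2δ`-neighbourhood of
the other three sides `[x, p]`, `[p, h p]`, `[h p, h x]` of the geodesic quadrilateral
`x, p, h p, h x`, and `[p, h p]` stays `3δ`-close to `α`. Points of `[x, p]` still project to `p`,
points of `[h p, h x]` to `h p`, and projections move little: `d(x, p) + d(p, y) ≤ d(x, y) + 6δ`
for `y` on the line, which gives `d(p, p') ≤ d(a, c) + 10δ` when `p`, `p'` are the projections of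
`a`, `c` to the two lines. So once `d(p, h p) > 14δ`, no point of `γ` is near both outer sides,
and between its last visit near `[x, p]` and its next visit near `[h p, h x]` it follows `[p, h p]`.
-/

open Set Filter

theorem exists_Icc_subset_of_Icc_subset_union₃ {a b : ℝ} {S₁ S₂ S₃ : Set ℝ}
    (hS₁ : IsClosed S₁) (hS₂ : IsClosed S₂) (hS₃ : IsClosed S₃) (hab : a ≤ b)
    (ha : a ∈ S₁) (hb : b ∈ S₃) (hcover : Icc a b ⊆ S₁ ∪ S₂ ∪ S₃)
    (hsep : ∀ t ∈ Icc a b, t ∈ S₁ → t ∉ S₃) :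
    ∃ t₁ t₂, a ≤ t₁ ∧ t₁ ≤ t₂ ∧ t₂ ≤ b ∧ t₁ ∈ S₁ ∧ t₂ ∈ S₃ ∧ Icc t₁ t₂ ⊆ S₂ := by
  have hbdd₁ : BddAbove (S₁ ∩ Icc a b) := bddAbove_Icc.mono inter_subset_right
  set t₁ := sSup (S₁ ∩ Icc a b)
  have ht₁ : t₁ ∈ S₁ ∩ Icc a b :=
    (hS₁.inter isClosed_Icc).csSup_mem ⟨a, ha, left_mem_Icc.2 hab⟩ hbdd₁
  have hbdd₃ : BddBelow (S₃ ∩ Icc t₁ b) := bddBelow_Icc.mono inter_subset_right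
  set t₂ := sInf (S₃ ∩ Icc t₁ b)
  have ht₂ : t₂ ∈ S₃ ∩ Icc t₁ b :=
    (hS₃.inter isClosed_Icc).csInf_mem ⟨b, hb, right_mem_Icc.2 ht₁.2.2⟩ hbdd₃
  have hne : t₁ ≠ t₂ := fun h => hsep t₁ ht₁.2 ht₁.1 (h ▸ ht₂.1)
  refine ⟨t₁, t₂, ht₁.2.1, ht₂.2.1, ht₂.2.2, ht₁.1, ht₂.1, ?_⟩
  rw [← closure_Ioo hne]
  refine closure_minimal (fun t ht => ?_) hS₂
  have htab : t ∈ Icc a b := ⟨ht₁.2.1.trans ht.1.le, ht.2.le.trans ht₂.2.2⟩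
  rcases hcover htab with (h₁ | h₂) | h₃
  · exact absurd (le_csSup hbdd₁ ⟨h₁, htab⟩) (not_le.2 ht.1)
  · exact h₂
  · exact absurd (csInf_le hbdd₃ ⟨h₃, ht.1.le, htab.2⟩) (not_le.2 ht.2)

theorem ContinuousOn.exists_Icc_mapsTo_of_mapsTo_union₃ {Y : Type*} [TopologicalSpace Y]
    {γ : ℝ → Y} {a b : ℝ} (hγ : ContinuousOn γ (Icc a b)) (hab : a ≤ b) {N₁ N₂ N₃ : Set Y}
    (h₁ : IsClosed N₁) (h₂ : IsClosed N₂) (h₃ : IsClosed N₃) (ha : γ a ∈ N₁) (hb : γ b ∈ N₃)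
    (hcover : MapsTo γ (Icc a b) (N₁ ∪ N₂ ∪ N₃)) (hsep : ∀ t ∈ Icc a b, γ t ∈ N₁ → γ t ∉ N₃) :
    ∃ t₁ t₂, a ≤ t₁ ∧ t₁ ≤ t₂ ∧ t₂ ≤ b ∧ γ t₁ ∈ N₁ ∧ γ t₂ ∈ N₃ ∧ MapsTo γ (Icc t₁ t₂) N₂ := by
  have hS : ∀ N, IsClosed N → IsClosed (Icc a b ∩ γ ⁻¹' N) := fun N hN =>
    hγ.preimage_isClosed_of_isClosed isClosed_Icc hN
  obtain ⟨t₁, t₂, h0, h12, h2, ⟨-, ht₁⟩, ⟨-, ht₂⟩, hsub⟩ :=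
    exists_Icc_subset_of_Icc_subset_union₃ (hS _ h₁) (hS _ h₂) (hS _ h₃) hab
      ⟨left_mem_Icc.2 hab, ha⟩ ⟨right_mem_Icc.2 hab, hb⟩
      (fun t ht => by rcases hcover ht with (h | h) | h <;> simp [ht, h])
      (fun t ht h₁ h₃ => hsep t ht h₁.2 h₃.2)
  exact ⟨t₁, t₂, h0, h12, h2, ht₁, ht₂, fun t ht => (hsub ht).2⟩

variable {X : Type*} [MetricSpace X] {δ : ℝ}

namespace IsGeodesicSegment

variable {γ : ℝ → X} {x y : X}

theorem continuousOn (hγ : IsGeodesicSegment γ x y) : ContinuousOn γ (Icc 0 (dist x y)) := by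
  refine LipschitzOnWith.continuousOn (K := 1) (LipschitzOnWith.of_dist_le_mul fun s hs t ht => ?_)
  rw [hγ.2.2 s hs t ht, NNReal.coe_one, one_mul, Real.dist_eq]

theorem isCompact_image (hγ : IsGeodesicSegment γ x y) : IsCompact (γ '' Icc 0 (dist x y)) :=
  isCompact_Icc.image_of_continuousOn hγ.continuousOn

theorem left_mem_image (hγ : IsGeodesicSegment γ x y) : x ∈ γ '' Icc 0 (dist x y) :=
  ⟨0, left_mem_Icc.2 dist_nonneg, hγ.1⟩

theorem right_mem_image (hγ : IsGeodesicSegment γ x y) : y ∈ γ '' Icc 0 (dist x y) :=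
  ⟨dist x y, right_mem_Icc.2 dist_nonneg, hγ.2.1⟩

theorem dist_left (hγ : IsGeodesicSegment γ x y) {t : ℝ} (ht : t ∈ Icc 0 (dist x y)) :
    dist x (γ t) = t := by
  rw [← hγ.1, hγ.2.2 0 (left_mem_Icc.2 dist_nonneg) t ht, zero_sub, abs_neg, abs_of_nonneg ht.1]

theorem dist_right (hγ : IsGeodesicSegment γ x y) {t : ℝ} (ht : t ∈ Icc 0 (dist x y)) :
    dist (γ t) y = dist x y - t := by
  conv_lhs => rw [← hγ.2.1]
  rw [hγ.2.2 t ht _ (right_mem_Icc.2 dist_nonneg), abs_sub_comm, abs_of_nonneg (sub_nonneg.2 ht.2)]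

theorem dist_add_dist_of_mem_image (hγ : IsGeodesicSegment γ x y) {z : X}
    (hz : z ∈ γ '' Icc 0 (dist x y)) : dist x z + dist z y = dist x y := by
  obtain ⟨t, ht, rfl⟩ := hz
  rw [hγ.dist_left ht, hγ.dist_right ht]
  ring

end IsGeodesicSegment

theorem Isometry.exists_geodesicSegment {α : ℝ → X} (hα : Isometry α) (s t : ℝ) :
    ∃ f : ℝ → X, IsGeodesicSegment f (α s) (α t) ∧
      f '' Icc 0 (dist (α s) (α t)) ⊆ range α := by
  have hd : dist (α s) (α t) = |s - t| := by rw [hα.dist_eq, Real.dist_eq]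
  rcases le_total s t with hst | hts
  · refine ⟨fun u => α (s + u), ⟨by simp, ?_, fun u _ v _ => ?_⟩, ?_⟩
    · rw [hd, abs_of_nonpos (sub_nonpos.2 hst)]; ring_nf
    · rw [hα.dist_eq, Real.dist_eq]; ring_nf
    · rintro _ ⟨u, -, rfl⟩; exact mem_range_self _
  · refine ⟨fun u => α (s - u), ⟨by simp, ?_, fun u _ v _ => ?_⟩, ?_⟩
    · rw [hd, abs_of_nonneg (sub_nonneg.2 hts)]; ring_nf
    · rw [hα.dist_eq, Real.dist_eq, abs_sub_comm]; ring_nf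
    · rintro _ ⟨u, -, rfl⟩; exact mem_range_self _

theorem IsCompact.exists_dist_le_of_mem_cthickening {K : Set X} (hK : IsCompact K) {r : ℝ}
    (hr : 0 ≤ r) {w : X} (hw : w ∈ cthickening r K) : ∃ u ∈ K, dist w u ≤ r := by
  rw [hK.cthickening_eq_biUnion_closedBall hr] at hw
  simpa using hw

namespace ThinTriangles

variable {σ₁ σ₂ σ₃ γ : ℝ → X} {x y z w : X}

theorem exists_dist_le (hX : ThinTriangles X δ) (h₁ : IsGeodesicSegment σ₁ x y)
    (h₂ : IsGeodesicSegment σ₂ y z) (h₃ : IsGeodesicSegment σ₃ x z) {t : ℝ}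
    (ht : t ∈ Icc 0 (dist x z)) :
    ∃ u ∈ σ₁ '' Icc 0 (dist x y) ∪ σ₂ '' Icc 0 (dist y z), dist (σ₃ t) u ≤ δ := by
  obtain ⟨u, hu, hdist⟩ := (h₁.isCompact_image.union h₂.isCompact_image).exists_infDist_eq_dist
    ⟨x, Or.inl h₁.left_mem_image⟩ (σ₃ t)
  exact ⟨u, hu, hdist ▸ hX x y z σ₁ σ₂ σ₃ h₁ h₂ h₃ t ht⟩

theorem exists_dist_le_two_mul_of_quadrilateral (hδ : 0 ≤ δ) (hX : ThinTriangles X δ)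
    (hgeo : GeodesicSpace X) (h₁ : IsGeodesicSegment σ₁ x y) (h₂ : IsGeodesicSegment σ₂ y z)
    (h₃ : IsGeodesicSegment σ₃ z w) (hγ : IsGeodesicSegment γ x w) {t : ℝ}
    (ht : t ∈ Icc 0 (dist x w)) :
    ∃ u ∈ σ₁ '' Icc 0 (dist x y) ∪ σ₂ '' Icc 0 (dist y z) ∪ σ₃ '' Icc 0 (dist z w),
      dist (γ t) u ≤ 2 * δ := by
  obtain ⟨τ, hτ⟩ := hgeo y w
  obtain ⟨u, hu | ⟨s, hs, rfl⟩, hdu⟩ := hX.exists_dist_le h₁ hτ hγ ht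
  · exact ⟨u, Or.inl (Or.inl hu), by linarith⟩
  obtain ⟨v, hv | hv, hdv⟩ := hX.exists_dist_le h₂ h₃ hτ hs
  · exact ⟨v, Or.inl (Or.inr hv), by linarith [dist_triangle (γ t) (τ s) v]⟩
  · exact ⟨v, Or.inr hv, by linarith [dist_triangle (γ t) (τ s) v]⟩

theorem exists_Icc_mapsTo_cthickening_of_quadrilateral (hδ : 0 ≤ δ) (hX : ThinTriangles X δ)
    (hgeo : GeodesicSpace X) (h₁ : IsGeodesicSegment σ₁ x y) (h₂ : IsGeodesicSegment σ₂ y z)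
    (h₃ : IsGeodesicSegment σ₃ z w) (hγ : IsGeodesicSegment γ x w)
    (hsep : ∀ a ∈ σ₁ '' Icc 0 (dist x y), ∀ c ∈ σ₃ '' Icc 0 (dist z w), 4 * δ < dist a c) :
    ∃ t₁ t₂, 0 ≤ t₁ ∧ t₁ ≤ t₂ ∧ t₂ ≤ dist x w ∧
      γ t₁ ∈ cthickening (2 * δ) (σ₁ '' Icc 0 (dist x y)) ∧
      γ t₂ ∈ cthickening (2 * δ) (σ₃ '' Icc 0 (dist z w)) ∧
      MapsTo γ (Icc t₁ t₂) (cthickening (2 * δ) (σ₂ '' Icc 0 (dist y z))) := by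
  refine hγ.continuousOn.exists_Icc_mapsTo_of_mapsTo_union₃ dist_nonneg
    isClosed_cthickening isClosed_cthickening isClosed_cthickening
    (by rw [hγ.1]; exact self_subset_cthickening _ h₁.left_mem_image)
    (by rw [hγ.2.1]; exact self_subset_cthickening _ h₃.right_mem_image)
    (fun t ht => ?_) (fun t _ ht₁ ht₃ => ?_)
  · obtain ⟨u, hu, hdu⟩ := hX.exists_dist_le_two_mul_of_quadrilateral hδ hgeo h₁ h₂ h₃ hγ ht
    rw [← cthickening_union, ← cthickening_union]
    exact mem_cthickening_of_dist_le _ u _ _ hu hdu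
  · have h2δ : 0 ≤ 2 * δ := by linarith
    obtain ⟨a, ha, hda⟩ := h₁.isCompact_image.exists_dist_le_of_mem_cthickening h2δ ht₁
    obtain ⟨c, hc, hdc⟩ := h₃.isCompact_image.exists_dist_le_of_mem_cthickening h2δ ht₃
    linarith [hsep a ha c hc, dist_triangle a (γ t) c, dist_comm a (γ t)]

theorem exists_dist_le_add_of_isometry (hX : ThinTriangles X δ) (hgeo : GeodesicSpace X)
    {α : ℝ → X} (hα : Isometry α) (hσ : IsGeodesicSegment σ₁ x z) (hx : x ∈ range α) (s₁ : ℝ)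
    (hw : w ∈ σ₁ '' Icc 0 (dist x z)) : ∃ s, dist w (α s) ≤ δ + dist (α s₁) z := by
  obtain ⟨s₀, rfl⟩ := hx
  obtain ⟨f, hf, hfα⟩ := hα.exists_geodesicSegment s₀ s₁
  obtain ⟨g, hg⟩ := hgeo (α s₁) z
  obtain ⟨t, ht, rfl⟩ := hw
  obtain ⟨u, hu | hu, hdu⟩ := hX.exists_dist_le hf hg hσ ht
  · obtain ⟨s, rfl⟩ := hfα hu
    exact ⟨s, by linarith [dist_nonneg (x := α s₁) (y := z)]⟩
  · have hu' := hg.dist_add_dist_of_mem_image hu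
    exact ⟨s₁, by
      linarith [dist_triangle (σ₁ t) u (α s₁), dist_comm u (α s₁), dist_nonneg (x := u) (y := z)]⟩

end ThinTriangles

def IsNearestPoint (A : Set X) (x p : X) : Prop :=
  p ∈ A ∧ ∀ a ∈ A, dist x p ≤ dist x a

namespace IsNearestPoint

variable {A : Set X} {x p : X}

theorem of_dist_add_dist_eq (hp : IsNearestPoint A x p) {a : X}
    (ha : dist x a + dist a p = dist x p) : IsNearestPoint A a p :=
  ⟨hp.1, fun b hb => by linarith [hp.2 b hb, dist_triangle x a b]⟩

theorem image {Y : Type*} [MetricSpace Y] {f : X → Y} (hf : Isometry f)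
    (hp : IsNearestPoint A x p) : IsNearestPoint (f '' A) (f x) (f p) :=
  ⟨mem_image_of_mem f hp.1, forall_mem_image.2 fun a ha => by
    simpa only [hf.dist_eq] using hp.2 a ha⟩

theorem dist_le_two_mul_add (hp : IsNearestPoint A x p) (w : X) {y : X} (hy : y ∈ A) :
    dist w p ≤ 2 * dist w x + dist w y := by
  linarith [hp.2 y hy, dist_triangle w x p, dist_triangle x w y, dist_comm x w]

theorem dist_add_dist_le (hδ : 0 ≤ δ) (hgeo : GeodesicSpace X) (hX : ThinTriangles X δ)
    (hp : IsNearestPoint A x p) {f : ℝ → X} {y : X} (hf : IsGeodesicSegment f p y)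
    (hfA : f '' Icc 0 (dist p y) ⊆ A) : dist x p + dist p y ≤ dist x y + 6 * δ := by
  obtain ⟨σ, hσ⟩ := hgeo x p
  obtain ⟨η, hη⟩ := hgeo x y
  have hcover : η '' Icc 0 (dist x y) ⊆
      cthickening δ (σ '' Icc 0 (dist x p)) ∪ cthickening δ (f '' Icc 0 (dist p y)) := by
    rintro _ ⟨t, ht, rfl⟩
    obtain ⟨u, hu | hu, hdu⟩ := hX.exists_dist_le hσ hf hη ht
    exacts [Or.inl (mem_cthickening_of_dist_le _ u _ _ hu hdu),
      Or.inr (mem_cthickening_of_dist_le _ u _ _ hu hdu)]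
  -- a point `w` of `[x, y]` that is `δ`-close to both `[x, p]` and `[p, y]` is `3δ`-close to `p`
  obtain ⟨w, hw, hwσ, hwf⟩ := isPreconnected_closed_iff.1
    (isPreconnected_Icc.image η hη.continuousOn) _ _ isClosed_cthickening isClosed_cthickening
    hcover ⟨x, hη.left_mem_image, self_subset_cthickening _ hσ.left_mem_image⟩
    ⟨y, hη.right_mem_image, self_subset_cthickening _ hf.right_mem_image⟩
  obtain ⟨a, ha, hwa⟩ := hσ.isCompact_image.exists_dist_le_of_mem_cthickening hδ hwσ
  obtain ⟨b, hb, hwb⟩ := hf.isCompact_image.exists_dist_le_of_mem_cthickening hδ hwf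
  have hap : dist a p ≤ 2 * δ := by
    linarith [hσ.dist_add_dist_of_mem_image ha, hp.2 b (hfA hb), dist_triangle x a w,
      dist_triangle x w b, dist_comm a w]
  linarith [hη.dist_add_dist_of_mem_image hw, dist_triangle x w p, dist_triangle p w y,
    dist_triangle w a p, dist_comm p w]

end IsNearestPoint

theorem Isometry.exists_isNearestPoint_range {α : ℝ → X} (hα : Isometry α) (w : X) :
    ∃ s, IsNearestPoint (range α) w (α s) := by
  have hcoercive : Tendsto (fun s => dist w (α s)) (cocompact ℝ) atTop := by
    refine tendsto_atTop_mono (fun s => ?_)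
      (tendsto_atTop_add_const_right _ (-dist w (α 0)) (tendsto_dist_right_cocompact_atTop 0))
    linarith [dist_triangle (α s) w (α 0), hα.dist_eq s 0, dist_comm w (α s)]
  obtain ⟨s, hs⟩ := (continuous_const.dist hα.continuous).exists_forall_le hcoercive
  exact ⟨s, mem_range_self s, forall_mem_range.2 hs⟩

theorem Isometry.exists_dist_le_of_infDist_range_le {α : ℝ → X} (hα : Isometry α) {w : X}
    {r : ℝ} (hw : infDist w (range α) ≤ r) : ∃ s, dist w (α s) ≤ r := by
  obtain ⟨s, hs⟩ := hα.exists_isNearestPoint_range w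
  exact ⟨s, ((le_infDist ⟨_, hs.1⟩).2 hs.2).trans hw⟩

theorem IsNearestPoint.dist_le_dist_add (hδ : 0 ≤ δ) (hgeo : GeodesicSpace X)
    (hX : ThinTriangles X δ) {α β : ℝ → X} (hα : Isometry α) (hβ : Isometry β) {r : ℝ}
    (hαβ : ∀ s, ∃ u, dist (α s) (β u) ≤ r) (hβα : ∀ u, ∃ s, dist (β u) (α s) ≤ r)
    {a c p p' : X} (hp : IsNearestPoint (range α) a p) (hp' : IsNearestPoint (range β) c p') :
    dist p p' ≤ dist a c + 2 * r + 6 * δ := by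
  obtain ⟨s₀, rfl⟩ := hp.1
  obtain ⟨u₀, rfl⟩ := hp'.1
  obtain ⟨u, hu⟩ := hαβ s₀
  obtain ⟨s, hs⟩ := hβα u₀
  obtain ⟨f, hf, hfα⟩ := hα.exists_geodesicSegment s₀ s
  obtain ⟨g, hg, hgβ⟩ := hβ.exists_geodesicSegment u₀ u
  have h₁ := hp.dist_add_dist_le hδ hgeo hX hf hfα
  have h₂ := hp'.dist_add_dist_le hδ hgeo hX hg hgβ
  linarith [dist_triangle a c (α s), dist_triangle c (β u₀) (α s), dist_triangle c a (β u),
    dist_triangle a (α s₀) (β u), dist_triangle (α s₀) (α s) (β u₀),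
    dist_triangle (α s₀) (β u) (β u₀), dist_comm a c, dist_comm (β u) (β u₀),
    dist_comm (α s) (β u₀)]

theorem IsGeodesicSegment.exists_decomposition_of_isNearestPoint (hδ : 0 ≤ δ)
    (hgeo : GeodesicSpace X) (hX : ThinTriangles X δ) {α β : ℝ → X} (hα : Isometry α)
    (hβ : Isometry β) (hαβ : ∀ s, ∃ u, dist (α s) (β u) ≤ 2 * δ)
    (hβα : ∀ u, ∃ s, dist (β u) (α s) ≤ 2 * δ) {x x' p p' : X}
    (hp : IsNearestPoint (range α) x p) (hp' : IsNearestPoint (range β) x' p')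
    (hpp' : 14 * δ < dist p p') {γ : ℝ → X} (hγ : IsGeodesicSegment γ x x') :
    ∃ t₁ t₂, 0 ≤ t₁ ∧ t₁ ≤ t₂ ∧ t₂ ≤ dist x x' ∧ dist (γ t₁) p ≤ 9 * δ ∧
      dist (γ t₂) p' ≤ 11 * δ ∧ (∀ t ∈ Icc t₁ t₂, infDist (γ t) (range α) ≤ 5 * δ) ∧
      dist p p' - 20 * δ ≤ t₂ - t₁ := by
  obtain ⟨σ₁, hσ₁⟩ := hgeo x p
  obtain ⟨σ₂, hσ₂⟩ := hgeo p p'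
  obtain ⟨σ₃, hσ₃⟩ := hgeo p' x'
  have hσ₁p : ∀ a ∈ σ₁ '' Icc 0 (dist x p), IsNearestPoint (range α) a p := fun a ha =>
    hp.of_dist_add_dist_eq (hσ₁.dist_add_dist_of_mem_image ha)
  have hσ₃p' : ∀ c ∈ σ₃ '' Icc 0 (dist p' x'), IsNearestPoint (range β) c p' := fun c hc =>
    hp'.of_dist_add_dist_eq (by
      linarith [hσ₃.dist_add_dist_of_mem_image hc, dist_comm p' c, dist_comm c x', dist_comm p' x'])
  obtain ⟨t₁, t₂, h0, h12, h2M, ht₁, ht₂, hmid⟩ :=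
    hX.exists_Icc_mapsTo_cthickening_of_quadrilateral hδ hgeo hσ₁ hσ₂ hσ₃ hγ fun a ha c hc => by
      linarith [(hσ₁p a ha).dist_le_dist_add hδ hgeo hX hα hβ hαβ hβα (hσ₃p' c hc)]
  have h2δ : 0 ≤ 2 * δ := by linarith
  obtain ⟨s', hs'⟩ : ∃ s, dist (α s) p' ≤ 2 * δ := by
    obtain ⟨u, rfl⟩ := hp'.1
    obtain ⟨s, hs⟩ := hβα u
    exact ⟨s, by rwa [dist_comm]⟩
  have hnear : ∀ t ∈ Icc t₁ t₂, ∃ s, dist (γ t) (α s) ≤ 5 * δ := fun t ht => by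
    obtain ⟨b, hb, hdb⟩ := hσ₂.isCompact_image.exists_dist_le_of_mem_cthickening h2δ (hmid ht)
    obtain ⟨s, hs⟩ := hX.exists_dist_le_add_of_isometry hgeo hα hσ₂ hp.1 s' hb
    exact ⟨s, by linarith [dist_triangle (γ t) b (α s)]⟩
  have hdist₁ : dist (γ t₁) p ≤ 9 * δ := by
    obtain ⟨a, ha, hda⟩ := hσ₁.isCompact_image.exists_dist_le_of_mem_cthickening h2δ ht₁
    obtain ⟨s, hs⟩ := hnear t₁ ⟨le_rfl, h12⟩
    linarith [(hσ₁p a ha).dist_le_two_mul_add (γ t₁) (mem_range_self s)]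
  have hdist₂ : dist (γ t₂) p' ≤ 11 * δ := by
    obtain ⟨c, hc, hdc⟩ := hσ₃.isCompact_image.exists_dist_le_of_mem_cthickening h2δ ht₂
    obtain ⟨s, hs⟩ := hnear t₂ ⟨h12, le_rfl⟩
    obtain ⟨u, hu⟩ := hαβ s
    linarith [(hσ₃p' c hc).dist_le_two_mul_add (γ t₂) (mem_range_self u),
      dist_triangle (γ t₂) (α s) (β u)]
  refine ⟨t₁, t₂, h0, h12, h2M, hdist₁, hdist₂, fun t ht => ?_, ?_⟩
  · obtain ⟨s, hs⟩ := hnear t ht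
    exact (infDist_le_dist_of_mem (mem_range_self s)).trans hs
  · have hlen := hγ.2.2 t₁ ⟨h0, h12.trans h2M⟩ t₂ ⟨h0.trans h12, h2M⟩
    rw [abs_of_nonpos (by linarith)] at hlen
    linarith [dist_triangle p (γ t₁) p', dist_triangle (γ t₁) (γ t₂) p', dist_comm p (γ t₁)]

/-- There exist constants `D₁, D₂ ≥ 0` depending only on `δ` such that in any
`δ`-hyperbolic geodesic space `X`, if an isometry `h` of `X` admits a geodesic axis `α`
(a bi-infinite geodesic with `hⁿ(α)` in the `2δ`-neighborhood of `α` for all `n : ℤ`),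
`q` is a nearest-point projection of `x` to `α`, and `dist q (h q) > 28δ`, then every
geodesic `γ` from `x` to `h x` decomposes as `γ₁γ₂γ₃` where the endpoint of `γ₁`
(resp. starting point of `γ₃`) is `D₁`-close to `q` (resp. `h q`), `γ₂` lies in the
`D₂`-neighborhood of `α`, and `γ₂` has length at least `dist q (h q) - 28δ`. -/
theorem random_walk_axis_decomposition (δ : ℝ) (hδ : 0 ≤ δ) :
    ∃ D₁ D₂ : ℝ, 0 ≤ D₁ ∧ 0 ≤ D₂ ∧
      ∀ (X : Type) [inst : MetricSpace X], GeodesicSpace X → ThinTriangles X δ →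
      ∀ (h : X ≃ᵢ X) (α : ℝ → X),
        (∀ s t : ℝ, dist (α s) (α t) = |s - t|) →
        (∀ n : ℤ, ∀ t : ℝ, Metric.infDist ((h ^ n) (α t)) (Set.range α) ≤ 2 * δ) →
      ∀ x q : X, q ∈ Set.range α → (∀ t : ℝ, dist x q ≤ dist x (α t)) →
        dist q (h q) > 28 * δ →
      ∀ γ : ℝ → X, IsGeodesicSegment γ x (h x) →
      ∃ t₁ t₂ : ℝ, 0 ≤ t₁ ∧ t₁ ≤ t₂ ∧ t₂ ≤ dist x (h x) ∧
        dist (γ t₁) q ≤ D₁ ∧ dist (γ t₂) (h q) ≤ D₁ ∧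
        (∀ t ∈ Set.Icc t₁ t₂, Metric.infDist (γ t) (Set.range α) ≤ D₂) ∧
        dist q (h q) - 28 * δ ≤ t₂ - t₁ := by
  refine ⟨11 * δ, 5 * δ, by linarith, by linarith, ?_⟩
  intro X _ hgeo hX h α hα haxis x q hq hproj hfar γ hγ
  have hα : Isometry α := Isometry.of_dist_eq hα
  have hβα : ∀ u, ∃ s, dist ((h ∘ α) u) (α s) ≤ 2 * δ := fun u =>
    hα.exists_dist_le_of_infDist_range_le (by simpa using haxis 1 u)
  have hαβ : ∀ s, ∃ u, dist (α s) ((h ∘ α) u) ≤ 2 * δ := fun s => by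
    obtain ⟨u, hu⟩ := hα.exists_dist_le_of_infDist_range_le (by simpa using haxis (-1) s)
    exact ⟨u, by simpa [← h.dist_eq (h⁻¹ (α s))] using hu⟩
  have hp : IsNearestPoint (range α) x q := ⟨hq, forall_mem_range.2 hproj⟩
  have hp' : IsNearestPoint (range (h ∘ α)) (h x) (h q) := range_comp h α ▸ hp.image h.isometry
  obtain ⟨t₁, t₂, h0, h12, h2M, hdist₁, hdist₂, hmid, hlen⟩ :=
    hγ.exists_decomposition_of_isNearestPoint hδ hgeo hX hα (h.isometry.comp hα) hαβ hβα hp hp'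
      (by linarith)
  exact ⟨t₁, t₂, h0, h12, h2M, by linarith, hdist₂, hmid, by linarith⟩
end

section
/- Let X be a geodesic metric space that is δ-hyperbolic (every geodesic triangle is δ-thin). Let α be a geodesic in X, let x, x' ∈ X, and let q, q' be nearest-point projections of x and x' respectively to α. Let γ be any geodesic from x to x', and let s be a point of α lying on the subsegment of α between q and q'. If d(s, q) > 4δ and d(s, q') > 4δ, then d(s, γ) ≤ 2δ. -/
open Metric

lemma seg_dists {X : Type*} [MetricSpace X] {β : ℝ → X} {p r : X}
    (h : IsGeodesicSegment β p r) {t : ℝ} (ht : t ∈ Set.Icc 0 (dist p r)) :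
    dist p (β t) = t ∧ dist (β t) r = dist p r - t := by
  obtain ⟨h0, h1, hg⟩ := h
  constructor
  · have := hg 0 ⟨le_refl 0, dist_nonneg⟩ t ht
    rw [h0] at this
    rw [this, zero_sub, abs_neg, abs_of_nonneg ht.1]
  · have := hg t ht (dist p r) ⟨dist_nonneg, le_refl _⟩
    rw [h1] at this
    rw [this, abs_of_nonpos (sub_nonpos.2 ht.2), neg_sub]

lemma seg_compact {X : Type*} [MetricSpace X] {β : ℝ → X} {p r : X}
    (h : IsGeodesicSegment β p r) : IsCompact (β '' Set.Icc 0 (dist p r)) := by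
  refine isCompact_Icc.image_of_continuousOn ?_
  have hL : LipschitzOnWith 1 β (Set.Icc 0 (dist p r)) := by
    apply LipschitzOnWith.of_dist_le_mul
    intro s hs t ht
    rw [h.2.2 s hs t ht, Real.dist_eq]
    simp
  exact hL.continuousOn

lemma sub_seg {X : Type*} [MetricSpace X] {α : ℝ → X} {a b : ℝ}
    (hα : IsGeodesicOn α a b) {u u' : ℝ} (hu : u ∈ Set.Icc a b) (hu' : u' ∈ Set.Icc a b) :
    ∃ β : ℝ → X, IsGeodesicSegment β (α u) (α u') ∧
      ∀ v ∈ Set.Icc (min u u') (max u u'), α v ∈ β '' Set.Icc 0 (dist (α u) (α u')) := by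
  have hD : dist (α u) (α u') = |u - u'| := hα u hu u' hu'
  by_cases h : u ≤ u'
  · have hD' : dist (α u) (α u') = u' - u := by
      rw [hD, abs_of_nonpos (by linarith), neg_sub]
    have hmem : ∀ t ∈ Set.Icc (0:ℝ) (dist (α u) (α u')), u + t ∈ Set.Icc a b := by
      intro t ht
      rw [hD'] at ht
      exact ⟨le_trans hu.1 (by linarith [ht.1]), by linarith [ht.2, hu'.2]⟩
    refine ⟨fun t => α (u + t), ⟨by simp, by rw [hD']; ring_nf, ?_⟩, ?_⟩
    · intro s hs t ht
      rw [hα _ (hmem s hs) _ (hmem t ht)]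
      ring_nf
    · intro w hw
      rw [min_eq_left h, max_eq_right h] at hw
      exact ⟨w - u, by rw [hD']; constructor <;> linarith [hw.1, hw.2], by ring_nf⟩
  · push_neg at h
    have hD' : dist (α u) (α u') = u - u' := by
      rw [hD, abs_of_nonneg (by linarith)]
    have hmem : ∀ t ∈ Set.Icc (0:ℝ) (dist (α u) (α u')), u - t ∈ Set.Icc a b := by
      intro t ht
      rw [hD'] at ht
      exact ⟨by linarith [ht.2, hu'.1], le_trans (by linarith [ht.1]) hu.2⟩
    refine ⟨fun t => α (u - t), ⟨by simp, by rw [hD']; ring_nf, ?_⟩, ?_⟩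
    · intro s ihs t iht
      rw [hα _ (hmem s ihs) _ (hmem t iht)]
      rw [show u - s - (u - t) = -(s - t) by ring, abs_neg]
    · intro w hw
      rw [min_eq_right h.le, max_eq_left h.le] at hw
      exact ⟨u - w, by rw [hD']; constructor <;> linarith [hw.1, hw.2], by ring_nf⟩

/-- Let `X` be a `δ`-hyperbolic geodesic metric space, `α` a geodesic in `X`
(parametrized by arc length on `[a, b]`), `q = α u` and `q' = α u'` nearest-point
projections of `x` and `x'` to `α`, and `γ` a geodesic from `x` to `x'`.  If `s = α v`
lies on the subsegment of `α` between `q` and `q'` with `dist s q > 4δ` and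
`dist s q' > 4δ`, then `s` is within distance `2δ` of `γ`. -/
theorem projection_segment_close_to_geodesic {X : Type*} [MetricSpace X]
    (δ : ℝ) (hδ : 0 ≤ δ) (hgeo : GeodesicSpace X) (hthin : ThinTriangles X δ)
    (α : ℝ → X) (a b : ℝ) (hab : a ≤ b) (hα : IsGeodesicOn α a b)
    (x x' : X) (u u' : ℝ) (hu : u ∈ Set.Icc a b) (hu' : u' ∈ Set.Icc a b)
    (hproj : ∀ t ∈ Set.Icc a b, dist x (α u) ≤ dist x (α t))
    (hproj' : ∀ t ∈ Set.Icc a b, dist x' (α u') ≤ dist x' (α t))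
    (γ : ℝ → X) (hγ : IsGeodesicSegment γ x x')
    (v : ℝ) (hv : v ∈ Set.Icc (min u u') (max u u'))
    (hvq : dist (α v) (α u) > 4 * δ) (hvq' : dist (α v) (α u') > 4 * δ) :
    Metric.infDist (α v) (γ '' Set.Icc (0 : ℝ) (dist x x')) ≤ 2 * δ := by
  have hvab : v ∈ Set.Icc a b :=
    ⟨le_trans (le_min hu.1 hu'.1) hv.1, le_trans hv.2 (max_le hu.2 hu'.2)⟩
  obtain ⟨β, hβ, hβmem⟩ := sub_seg hα hu hu'
  obtain ⟨t0, ht0, hst0⟩ := hβmem v hv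
  obtain ⟨σ, hσ⟩ := hgeo (α u) x
  obtain ⟨β₂, hβ₂⟩ := hgeo x (α u')
  have h1 := hthin (α u) x (α u') σ β₂ β hσ hβ₂ hβ t0 ht0
  rw [hst0] at h1
  have hc1 : IsCompact (σ '' Set.Icc 0 (dist (α u) x) ∪ β₂ '' Set.Icc 0 (dist x (α u'))) :=
    (seg_compact hσ).union (seg_compact hβ₂)
  have hne1 : (σ '' Set.Icc 0 (dist (α u) x) ∪
      β₂ '' Set.Icc 0 (dist x (α u'))).Nonempty :=
    ⟨σ 0, Or.inl ⟨0, ⟨le_refl _, dist_nonneg⟩, rfl⟩⟩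
  obtain ⟨y, hy, hdy⟩ := hc1.exists_infDist_eq_dist hne1 (α v)
  have hdy' : dist (α v) y ≤ δ := by rw [← hdy]; exact h1
  cases hy with
  | inl hy =>
    exfalso
    obtain ⟨t, ht, rfl⟩ := hy
    obtain ⟨hqt, htx⟩ := seg_dists hσ ht
    have h2 : dist x (α u) ≤ dist x (α v) := hproj v hvab
    have h3 : dist x (α v) ≤ dist x (σ t) + dist (σ t) (α v) := dist_triangle _ _ _
    have e1 : dist x (σ t) = dist (α u) x - t := by rw [dist_comm]; exact htx
    have e2 : dist (σ t) (α v) = dist (α v) (σ t) := dist_comm _ _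
    have e3 : dist x (α u) = dist (α u) x := dist_comm _ _
    have h5 : dist (α v) (α u) ≤ dist (α v) (σ t) + dist (σ t) (α u) := dist_triangle _ _ _
    have e4 : dist (σ t) (α u) = dist (α u) (σ t) := dist_comm _ _
    linarith
  | inr hy =>
    obtain ⟨t, ht, rfl⟩ := hy
    obtain ⟨τ, hτ⟩ := hgeo x' (α u')
    have h2 := hthin x x' (α u') γ τ β₂ hγ hτ hβ₂ t ht
    have hc2 : IsCompact (γ '' Set.Icc 0 (dist x x') ∪
        τ '' Set.Icc 0 (dist x' (α u'))) := (seg_compact hγ).union (seg_compact hτ)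
    have hne2 : (γ '' Set.Icc 0 (dist x x') ∪
        τ '' Set.Icc 0 (dist x' (α u'))).Nonempty :=
      ⟨γ 0, Or.inl ⟨0, ⟨le_refl _, dist_nonneg⟩, rfl⟩⟩
    obtain ⟨z, hz, hdz⟩ := hc2.exists_infDist_eq_dist hne2 (β₂ t)
    have hdz' : dist (β₂ t) z ≤ δ := by rw [← hdz]; exact h2
    cases hz with
    | inl hz =>
      calc Metric.infDist (α v) (γ '' Set.Icc (0:ℝ) (dist x x')) ≤ dist (α v) z :=
            Metric.infDist_le_dist_of_mem hz
        _ ≤ dist (α v) (β₂ t) + dist (β₂ t) z := dist_triangle _ _ _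
        _ ≤ 2 * δ := by linarith
    | inr hz =>
      exfalso
      obtain ⟨r, hr, rfl⟩ := hz
      obtain ⟨hx'r, hrq'⟩ := seg_dists hτ hr
      have h3 : dist x' (α u') ≤ dist x' (α v) := hproj' v hvab
      have h4 : dist x' (α v) ≤ dist x' (τ r) + dist (τ r) (β₂ t) + dist (β₂ t) (α v) :=
        dist_triangle4 _ _ _ _
      have h5 : dist (α v) (α u') ≤ dist (α v) (β₂ t) + dist (β₂ t) (τ r) + dist (τ r) (α u') :=
        dist_triangle4 _ _ _ _
      have e1 : dist (τ r) (β₂ t) = dist (β₂ t) (τ r) := dist_comm _ _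
      have e2 : dist (β₂ t) (α v) = dist (α v) (β₂ t) := dist_comm _ _
      linarith
end

section
/- Let G be a countable group acting measurably on a measurable space X, let μ be a probability measure on G, and let ν be a μ-stationary probability measure on X. Let A ⊆ X be a measurable subset. Assume: (i) for all g₁, g₂ ∈ G, either ν(g₁A ∩ g₂A) = 0 or ν(g₁A △ g₂A) = 0 (i.e., any two translates of A either are ν-essentially disjoint or ν-essentially coincide); and (ii) there are infinitely many elements g of the subgroup of G generated by the support of μ whose translates gA are pairwise not ν-essentially equal. Then ν(A) = 0. -/
open MeasureTheory Pointwise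
open scoped ENNReal

/-!
By stationarity, `g ↦ ν (g • A)` is `μ`-harmonic on the subgroup `H` generated by the support
of `μ`. Translates of different measures are essentially disjoint, so only finitely many values
lie above any positive level and the function attains its maximum `c` on `H`. The maximum
principle carries the value `c` from `g` to `k⁻¹ * g` for `k` in the support. For `k * g`, the
union `W` of the maximal translates satisfies `k⁻¹ • W ⊆ W`, hence `k⁻¹ • W = W` a.e., so
`g • A` meets some maximal `(k⁻¹ * t) • A` in positive measure, and then `(k * g) • A` meets
`t • A`, which forces them to coincide. Hence `ν (g • A) = c` on all of `H`, and infinitely many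
essentially disjoint translates of measure `c` fit into a probability space only if `c = 0`.
-/

/-- `ν` is a `μ`-stationary measure for the action of the countable group `G` on `X`:
`ν(B) = Σ_{g ∈ G} μ({g}) ν(g⁻¹ • B)` for every measurable `B`. -/
def IsStationaryMeasure {G X : Type*} [Group G] [MeasurableSpace G] [MeasurableSpace X]
    [MulAction G X] (μ : Measure G) (ν : Measure X) : Prop :=
  ∀ B : Set X, MeasurableSet B → ν B = ∑' g : G, μ {g} * ν (g⁻¹ • B)

theorem ENNReal.eq_of_tsum_mul_eq_of_le {ι : Type*} {w φ : ι → ℝ≥0∞} {a : ℝ≥0∞}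
    (hw : ∑' i, w i = 1) (ha : a ≠ ∞) (hφ : ∀ i, w i ≠ 0 → φ i ≤ a)
    (hsum : a = ∑' i, w i * φ i) {i : ι} (hi : w i ≠ 0) : φ i = a := by
  by_contra hne
  have hw_le : ∀ j, w j * φ j ≤ w j * a := fun j => by
    rcases eq_or_ne (w j) 0 with h | h
    · simp [h]
    · exact mul_le_mul_right (hφ j h) _
  have hwi_ne_top : w i ≠ ∞ := ne_top_of_le_ne_top one_ne_top (hw ▸ ENNReal.le_tsum i)
  have hlt : w i * φ i < w i * a :=
    (ENNReal.mul_lt_mul_iff_right hi hwi_ne_top).mpr ((hφ i hi).lt_of_ne hne)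
  have := ENNReal.tsum_lt_tsum (hsum ▸ ha) hw_le hlt
  rw [← hsum, ENNReal.tsum_mul_right, hw, one_mul] at this
  exact this.false

theorem exists_forall_measure_le_of_aedisjoint_or_ae_eq {ι X : Type*} [MeasurableSpace X]
    {ν : Measure X} [IsFiniteMeasure ν] [Nonempty ι] {s : ι → Set X}
    (hs : ∀ i, NullMeasurableSet (s i) ν)
    (hs_disj : ∀ i j, AEDisjoint ν (s i) (s j) ∨ s i =ᵐ[ν] s j) :
    ∃ i, ∀ j, ν (s j) ≤ ν (s i) := by
  by_cases hzero : ∀ i, ν (s i) = 0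
  · exact ⟨Classical.arbitrary ι, fun j => by simp [hzero]⟩
  push Not at hzero
  obtain ⟨i₀, hi₀⟩ := hzero
  set V := (fun i => ν (s i)) '' {i | ν (s i₀) ≤ ν (s i)}
  have hmemV : ∀ v : V, ∃ i, ν (s i₀) ≤ ν (s i) ∧ ν (s i) = v := fun v => v.2
  choose r hr_ge hr_eq using hmemV
  -- sets with distinct measures are a.e. disjoint, so only finitely many measures exceed `ν (s i₀)`
  have hV : V.Finite := by
    have hfin := Measure.finite_const_le_meas_of_disjoint_iUnion₀ ν (pos_iff_ne_zero.2 hi₀)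
      (fun v => hs (r v)) (fun v w hvw => (hs_disj _ _).resolve_right fun h =>
        hvw (Subtype.ext (by rw [← hr_eq v, ← hr_eq w, measure_congr h])))
      (measure_ne_top _ _)
    exact Set.finite_coe_iff.mp (Set.finite_univ_iff.mp (hfin.subset fun v _ => hr_ge v))
  obtain ⟨_, ⟨i, hi, rfl⟩, hmax⟩ := V.exists_max_image id hV ⟨_, i₀, le_refl (ν (s i₀)), rfl⟩
  refine ⟨i, fun j => ?_⟩
  rcases le_total (ν (s i₀)) (ν (s j)) with h | h
  · exact hmax _ ⟨j, h, rfl⟩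
  · exact h.trans hi

namespace IsStationaryMeasure

variable {G X : Type*} [Group G] [MeasurableSpace G] [MeasurableSpace X] [MulAction G X]
  {μ : Measure G} {ν : Measure X}

theorem tsum_measure_singleton [IsProbabilityMeasure ν] (hstat : IsStationaryMeasure μ ν) :
    ∑' g, μ {g} = 1 := by
  simpa using (hstat Set.univ MeasurableSet.univ).symm

theorem measure_inv_smul_eq_zero (hstat : IsStationaryMeasure μ ν) {B : Set X}
    (hB : MeasurableSet B) (hB0 : ν B = 0) {h : G} (hh : μ {h} ≠ 0) : ν (h⁻¹ • B) = 0 :=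
  (mul_eq_zero.mp (ENNReal.tsum_eq_zero.mp ((hstat B hB).symm.trans hB0) h)).resolve_left hh

theorem measure_inv_smul_eq_of_le [IsProbabilityMeasure ν] (hstat : IsStationaryMeasure μ ν)
    {B : Set X} (hB : MeasurableSet B) (hle : ∀ k, μ {k} ≠ 0 → ν (k⁻¹ • B) ≤ ν B)
    {h : G} (hh : μ {h} ≠ 0) : ν (h⁻¹ • B) = ν B :=
  ENNReal.eq_of_tsum_mul_eq_of_le hstat.tsum_measure_singleton (measure_ne_top ν B) hle
    (hstat B hB) hh

theorem inv_smul_ae_eq_of_inv_smul_subset [IsProbabilityMeasure ν] [MeasurableConstSMul G X]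
    (hstat : IsStationaryMeasure μ ν) {B : Set X} (hB : MeasurableSet B)
    (hsub : ∀ k, μ {k} ≠ 0 → k⁻¹ • B ⊆ B) {h : G} (hh : μ {h} ≠ 0) : h⁻¹ • B =ᵐ[ν] B :=
  ae_eq_of_subset_of_measure_ge (hsub h hh)
    (hstat.measure_inv_smul_eq_of_le hB (fun k hk => measure_mono (hsub k hk)) hh).ge
    (hB.const_smul _).nullMeasurableSet (measure_ne_top ν B)

section Translates

variable [MeasurableConstSMul G X] [IsProbabilityMeasure ν] {A : Set X} {c : ℝ≥0∞}
  {H : Subgroup G}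

theorem measure_inv_mul_smul_eq (hstat : IsStationaryMeasure μ ν) (hA : MeasurableSet A)
    (hH : ∀ k, μ {k} ≠ 0 → k ∈ H) (hmax : ∀ g ∈ H, ν (g • A) ≤ c)
    {g : G} (hg : g ∈ H) (hgc : ν (g • A) = c) {k : G} (hk : μ {k} ≠ 0) :
    ν ((k⁻¹ * g) • A) = c := by
  rw [← hgc, mul_smul]
  refine hstat.measure_inv_smul_eq_of_le (hA.const_smul g) (fun k' hk' => ?_) hk
  rw [smul_smul, hgc]
  exact hmax _ (mul_mem (inv_mem (hH k' hk')) hg)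

theorem measure_mul_smul_eq [Countable G] (hstat : IsStationaryMeasure μ ν)
    (hA : MeasurableSet A)
    (hdisj : ∀ g₁ g₂ : G, AEDisjoint ν (g₁ • A) (g₂ • A) ∨ g₁ • A =ᵐ[ν] g₂ • A)
    (hH : ∀ k, μ {k} ≠ 0 → k ∈ H) (hmax : ∀ g ∈ H, ν (g • A) ≤ c)
    {g : G} (hg : g ∈ H) (hgc : ν (g • A) = c) {k : G} (hk : μ {k} ≠ 0) :
    ν ((k * g) • A) = c := by
  rcases eq_or_ne c 0 with rfl | hc
  · exact le_zero_iff.mp (hmax _ (mul_mem (hH k hk) hg))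
  set M := {t | t ∈ H ∧ ν (t • A) = c}
  set W := ⋃ t : M, (t : G) • A
  have hW : MeasurableSet W := MeasurableSet.iUnion fun t => hA.const_smul _
  have hWsub : ∀ k, μ {k} ≠ 0 → k⁻¹ • W ⊆ W := by
    intro k hk
    simp only [W, Set.smul_set_iUnion, smul_smul]
    exact Set.iUnion_subset fun t => Set.subset_iUnion_of_subset
      ⟨k⁻¹ * t, mul_mem (inv_mem (hH k hk)) t.2.1,
        hstat.measure_inv_mul_smul_eq hA hH hmax t.2.1 t.2.2 hk⟩ subset_rfl
  -- `W` is the union of the maximal translates; `k⁻¹ • W ⊆ W` forces `k⁻¹ • W = W` a.e.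
  have hgW : g • A ≤ᵐ[ν] k⁻¹ • W :=
    (Set.subset_iUnion (fun t : M => (t : G) • A) ⟨g, hg, hgc⟩).eventuallyLE.trans
      (hstat.inv_smul_ae_eq_of_inv_smul_subset hW hWsub hk).symm.le
  obtain ⟨t, ht⟩ : ∃ t : M, ν (g • A ∩ (k⁻¹ * t) • A) ≠ 0 := by
    by_contra! h
    have hnull : ν (g • A ∩ k⁻¹ • W) = 0 := by
      simp only [W, Set.smul_set_iUnion, Set.inter_iUnion, smul_smul]
      exact measure_iUnion_null h
    refine hc (hgc ▸ measure_mono_null_ae ?_ hnull)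
    simpa using (Filter.EventuallyLE.refl _ (g • A)).inter hgW
  have hnot : ¬ AEDisjoint ν ((k * g) • A) ((t : G) • A) := fun h => ht <| by
    simpa [Set.smul_set_inter, smul_smul] using
      hstat.measure_inv_smul_eq_zero ((hA.const_smul _).inter (hA.const_smul _)) h hk
  rw [measure_congr ((hdisj _ _).resolve_left hnot), t.2.2]

theorem measure_smul_eq_of_forall_le [Countable G] (hstat : IsStationaryMeasure μ ν)
    (hA : MeasurableSet A)
    (hdisj : ∀ g₁ g₂ : G, AEDisjoint ν (g₁ • A) (g₂ • A) ∨ g₁ • A =ᵐ[ν] g₂ • A)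
    {g₀ : G} (hg₀ : g₀ ∈ Subgroup.closure {g : G | μ {g} ≠ 0})
    (hmax : ∀ g ∈ Subgroup.closure {g : G | μ {g} ≠ 0}, ν (g • A) ≤ ν (g₀ • A))
    {g : G} (hg : g ∈ Subgroup.closure {g : G | μ {g} ≠ 0}) : ν (g • A) = ν (g₀ • A) := by
  set H := Subgroup.closure {g : G | μ {g} ≠ 0}
  have hH : ∀ k, μ {k} ≠ 0 → k ∈ H := fun k hk => Subgroup.subset_closure hk
  have key : ∀ x ∈ H, ∀ h ∈ H, ν (h • A) = ν (g₀ • A) → ν ((x * h) • A) = ν (g₀ • A) := by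
    intro x hx
    induction hx using Subgroup.closure_induction'' with
    | mem k hk => exact fun h hh hhc => hstat.measure_mul_smul_eq hA hdisj hH hmax hh hhc hk
    | inv_mem k hk => exact fun h hh hhc => hstat.measure_inv_mul_smul_eq hA hH hmax hh hhc hk
    | one => simp
    | mul x y hx hy ihx ihy =>
      intro h hh hhc
      rw [mul_assoc]
      exact ihx _ (mul_mem hy hh) (ihy h hh hhc)
  simpa using key _ (mul_mem hg (inv_mem hg₀)) g₀ hg₀ rfl

end Translates

end IsStationaryMeasure

theorem stationary_measure_zero_of_infinitely_many_translates_general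
    {G X : Type*} [Group G] [Countable G] [MeasurableSpace G] [MeasurableSpace X]
    [MulAction G X] [MeasurableSMul G X]
    (μ : Measure G)
    (ν : Measure X) [IsProbabilityMeasure ν]
    (hstat : IsStationaryMeasure μ ν)
    (A : Set X) (hA : MeasurableSet A)
    (hdisj : ∀ g₁ g₂ : G, ν ((g₁ • A) ∩ (g₂ • A)) = 0 ∨ ν (symmDiff (g₁ • A) (g₂ • A)) = 0)
    (hinf : ∃ S : Set G, S.Infinite ∧
      S ⊆ (Subgroup.closure {g : G | μ {g} ≠ 0} : Subgroup G) ∧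
      ∀ g ∈ S, ∀ h ∈ S, g ≠ h → ν (symmDiff (g • A) (h • A)) ≠ 0) :
    ν A = 0 := by
  obtain ⟨S, hS_inf, hS_sub, hS_ne⟩ := hinf
  set H := Subgroup.closure {g : G | μ {g} ≠ 0}
  have hdisj' : ∀ g₁ g₂ : G, AEDisjoint ν (g₁ • A) (g₂ • A) ∨ g₁ • A =ᵐ[ν] g₂ • A :=
    fun g₁ g₂ => (hdisj g₁ g₂).imp_right measure_symmDiff_eq_zero_iff.mp
  have hA' : ∀ g : G, NullMeasurableSet (g • A) ν := fun g => (hA.const_smul g).nullMeasurableSet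
  obtain ⟨⟨g₀, hg₀⟩, hmax⟩ := exists_forall_measure_le_of_aedisjoint_or_ae_eq
    (s := fun g : H => (g : G) • A) (fun g => hA' g)
    (fun g h => hdisj' g h)
  have hconst := fun g (hg : g ∈ H) =>
    hstat.measure_smul_eq_of_forall_le hA hdisj' hg₀ (fun g hg => hmax ⟨g, hg⟩) hg
  by_contra hA0
  have hpos : 0 < ν (g₀ • A) := by
    rw [← hconst 1 (one_mem _), one_smul]
    exact pos_iff_ne_zero.mpr hA0
  have hS_fin := Measure.finite_const_le_meas_of_disjoint_iUnion₀ ν hpos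
    (As := fun g : S => (g : G) • A) (fun g => hA' g)
    (fun g h hgh => (hdisj g h).resolve_right (hS_ne g g.2 h h.2 (Subtype.coe_ne_coe.mpr hgh)))
    (measure_ne_top _ _)
  exact hS_inf (Set.finite_coe_iff.mp (Set.finite_univ_iff.mp
    (hS_fin.subset fun g _ => (hconst g (hS_sub g.2)).ge)))

/-- If `A ⊆ X` is measurable, any two `G`-translates of `A` are either `ν`-essentially
disjoint or `ν`-essentially equal, and there are infinitely many elements of the
subgroup generated by the support of `μ` whose translates of `A` are pairwise not
`ν`-essentially equal, then `ν(A) = 0`. -/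
theorem stationary_measure_zero_of_infinitely_many_translates
    {G X : Type*} [Group G] [Countable G] [MeasurableSpace G] [MeasurableSpace X]
    [MulAction G X] [MeasurableSMul G X]
    (μ : Measure G) [IsProbabilityMeasure μ]
    (ν : Measure X) [IsProbabilityMeasure ν]
    (hstat : IsStationaryMeasure μ ν)
    (A : Set X) (hA : MeasurableSet A)
    (hdisj : ∀ g₁ g₂ : G, ν ((g₁ • A) ∩ (g₂ • A)) = 0 ∨ ν (symmDiff (g₁ • A) (g₂ • A)) = 0)
    (hinf : ∃ S : Set G, S.Infinite ∧
      S ⊆ (Subgroup.closure {g : G | μ {g} ≠ 0} : Subgroup G) ∧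
      ∀ g ∈ S, ∀ h ∈ S, g ≠ h → ν (symmDiff (g • A) (h • A)) ≠ 0) :
    ν A = 0 :=
  stationary_measure_zero_of_infinitely_many_translates_general μ ν hstat A hA hdisj hinf
end
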